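/- For every integer k ≥ 3, the quantity ω_k(0) := ψ(k/2) - ψ(1) - log k is nondecreasing along k ↦ k+2, i.e., ω_{k+2}(0) - ω_k(0) = 2/k - log(1 + 2/k) ≥ 0, and lim_{k→∞} ω_k(0) = γ - log 2 < 0, where γ is the Euler–Mascheroni constant. Consequently ω_k(0) < 0 for all integers k ≥ 1. -/

import Mathlib

open Real Filter Set

/-- The digamma function `ψ = (log ∘ Γ)'`. -/
noncomputable def digamma (x : ℝ) : ℝ := deriv (fun y => Real.log (Real.Gamma y)) x

/-! `ψ` is the slope of the convex function `log ∘ Γ`, and `log Γ (x + 1) - log Γ x = log x`, so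
convexity squeezes `ψ x` between `log (x - 1)` and `log x`; hence `ψ x - log x → 0`. With
`ω k = ψ (k / 2) - ψ 1 - log k`, the recurrence `ψ (x + 1) = ψ x + 1 / x` gives
`ω (k + 2) - ω k = 2 / k - log (1 + 2 / k) ≥ 0`, and `ω k → γ - log 2 < 0`, so every `ω k` lies
below its negative limit. -/

namespace Real

theorem differentiableAt_Gamma_of_pos {x : ℝ} (hx : 0 < x) : DifferentiableAt ℝ Gamma x :=
  differentiableAt_Gamma fun m => ((neg_nonpos.mpr m.cast_nonneg).trans_lt hx).ne'

theorem differentiableAt_log_Gamma {x : ℝ} (hx : 0 < x) :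
    DifferentiableAt ℝ (fun y => log (Gamma y)) x :=
  (differentiableAt_Gamma_of_pos hx).log (Gamma_pos_of_pos hx).ne'

theorem log_Gamma_add_one {x : ℝ} (hx : 0 < x) :
    log (Gamma (x + 1)) = log x + log (Gamma x) := by
  rw [Gamma_add_one hx.ne', log_mul hx.ne' (Gamma_pos_of_pos hx).ne']

end Real

theorem digamma_one : digamma 1 = -eulerMascheroniConstant := by
  rw [digamma, deriv.log (differentiableAt_Gamma_of_pos one_pos) (Gamma_pos_of_pos one_pos).ne',
    hasDerivAt_Gamma_one.deriv, Gamma_one, div_one]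

theorem digamma_add_one {x : ℝ} (hx : 0 < x) : digamma (x + 1) = digamma x + 1 / x := by
  unfold digamma
  rw [← deriv_comp_add_const, one_div, ← deriv_log,
    ← deriv_add (differentiableAt_log_Gamma hx) (differentiableAt_log hx.ne')]
  refine EventuallyEq.deriv_eq ?_
  filter_upwards [eventually_gt_nhds hx] with y hy
  rw [log_Gamma_add_one hy, add_comm]
  rfl

theorem digamma_le_log {x : ℝ} (hx : 0 < x) : digamma x ≤ log x := by
  have h := convexOn_log_Gamma.deriv_le_slope (mem_Ioi.mpr hx)
    (mem_Ioi.mpr (by linarith : (0 : ℝ) < x + 1)) (by linarith) (differentiableAt_log_Gamma hx)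
  simp only [slope_def_field, add_sub_cancel_left, div_one, Function.comp_apply] at h
  rwa [log_Gamma_add_one hx, add_sub_cancel_right] at h

theorem log_sub_one_le_digamma {x : ℝ} (hx : 1 < x) : log (x - 1) ≤ digamma x := by
  have hx₁ : 0 < x - 1 := by linarith
  have h := convexOn_log_Gamma.slope_le_deriv (mem_Ioi.mpr hx₁)
    (mem_Ioi.mpr (by linarith : (0 : ℝ) < x)) (by linarith) (differentiableAt_log_Gamma (by linarith))
  have hrec := log_Gamma_add_one hx₁
  rw [sub_add_cancel] at hrec
  simp only [slope_def_field, sub_sub_cancel, div_one, Function.comp_apply] at h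
  rwa [hrec, add_sub_cancel_right] at h

theorem tendsto_digamma_sub_log_atTop :
    Tendsto (fun x => digamma x - log x) atTop (nhds 0) := by
  have hlower : Tendsto (fun x : ℝ => log (1 - 1 / x)) atTop (nhds 0) := by
    have h : Tendsto (fun x : ℝ => 1 - 1 / x) atTop (nhds 1) := by
      simpa using (tendsto_const_nhds (x := (1 : ℝ))).sub tendsto_inv_atTop_zero
    simpa [Function.comp_def] using (continuousAt_log one_ne_zero).tendsto.comp h
  refine tendsto_of_tendsto_of_tendsto_of_le_of_le' hlower tendsto_const_nhds ?_ ?_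
  · filter_upwards [eventually_gt_atTop 1] with x hx
    have hx₀ : (0 : ℝ) < x := by linarith
    have : log (1 - 1 / x) = log (x - 1) - log x := by
      rw [← log_div (by linarith) hx₀.ne', sub_div, div_self hx₀.ne']
    linarith [log_sub_one_le_digamma hx]
  · filter_upwards [eventually_gt_atTop 0] with x hx
    linarith [digamma_le_log hx]

/-- The paper's `ω_k(0)`, extended to real `k`. -/
noncomputable def omegaZero (x : ℝ) : ℝ := digamma (x / 2) - digamma 1 - log x

theorem omegaZero_add_two_sub {x : ℝ} (hx : 0 < x) :
    omegaZero (x + 2) - omegaZero x = 2 / x - log (1 + 2 / x) := by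
  have hhalf : (x + 2) / 2 = x / 2 + 1 := by ring
  have hlog : log (x + 2) = log x + log (1 + 2 / x) := by
    rw [← log_mul hx.ne' (by positivity), mul_add, mul_div_cancel₀ _ hx.ne', mul_one]
  rw [omegaZero, omegaZero, hhalf, digamma_add_one (by positivity), hlog]
  field_simp
  ring

theorem log_one_add_le_self {t : ℝ} (ht : -1 < t) : log (1 + t) ≤ t := by
  linarith [log_le_sub_one_of_pos (by linarith : 0 < 1 + t)]

theorem omegaZero_le_add_two {x : ℝ} (hx : 0 < x) : omegaZero x ≤ omegaZero (x + 2) := by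
  have hdiff := omegaZero_add_two_sub hx
  have hpos : 0 < 2 / x := by positivity
  have hlog := log_one_add_le_self (by linarith : -1 < 2 / x)
  linarith

theorem tendsto_omegaZero_atTop :
    Tendsto omegaZero atTop (nhds (eulerMascheroniConstant - log 2)) := by
  have hhalf : Tendsto (fun x : ℝ => digamma (x / 2) - log (x / 2)) atTop (nhds 0) :=
    tendsto_digamma_sub_log_atTop.comp (tendsto_id.atTop_div_const two_pos)
  have h := hhalf.add_const (eulerMascheroniConstant - log 2)
  rw [zero_add] at h
  refine h.congr' ?_
  filter_upwards [eventually_gt_atTop 0] with x hx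
  rw [omegaZero, digamma_one, log_div hx.ne' two_ne_zero]
  ring

theorem eulerMascheroniConstant_lt_log_two : eulerMascheroniConstant < log 2 := by
  linarith [eulerMascheroniConstant_lt_two_thirds, log_two_gt_d9]

/-- `ω` increases along `k, k + 2, k + 4, …` to its limit, so it stays below it. -/
theorem omegaZero_natCast_le {k : ℕ} (hk : 0 < k) :
    omegaZero k ≤ eulerMascheroniConstant - log 2 := by
  have hmono : Monotone fun n : ℕ => omegaZero (k + 2 * n) := by
    refine monotone_nat_of_le_succ fun n => ?_
    push_cast
    rw [show (k : ℝ) + 2 * (n + 1) = k + 2 * n + 2 by ring]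
    exact omegaZero_le_add_two (by positivity)
  have hlim : Tendsto (fun n : ℕ => omegaZero (k + 2 * n)) atTop
      (nhds (eulerMascheroniConstant - log 2)) :=
    tendsto_omegaZero_atTop.comp <| tendsto_atTop_add_const_left _ _ <|
      tendsto_natCast_atTop_atTop.const_mul_atTop two_pos
  simpa using hmono.ge_of_tendsto hlim 0

theorem omega_k_zero_neg :
    (∀ k : ℕ, 3 ≤ k →
      (digamma ((k + 2 : ℝ) / 2) - digamma 1 - Real.log (k + 2))
          - (digamma ((k : ℝ) / 2) - digamma 1 - Real.log k)
        = 2 / k - Real.log (1 + 2 / k) ∧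
      0 ≤ 2 / (k : ℝ) - Real.log (1 + 2 / k)) ∧
    Tendsto (fun k : ℕ => digamma ((k : ℝ) / 2) - digamma 1 - Real.log k) atTop
      (nhds (Real.eulerMascheroniConstant - Real.log 2)) ∧
    Real.eulerMascheroniConstant - Real.log 2 < 0 ∧
    (∀ k : ℕ, 1 ≤ k → digamma ((k : ℝ) / 2) - digamma 1 - Real.log k < 0) := by
  refine ⟨fun k hk => ?_, tendsto_omegaZero_atTop.comp tendsto_natCast_atTop_atTop,
    sub_neg.mpr eulerMascheroniConstant_lt_log_two, fun k hk => ?_⟩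
  · have hk₀ : (0 : ℝ) < k := by exact_mod_cast (by omega : 0 < k)
    refine ⟨omegaZero_add_two_sub hk₀, ?_⟩
    rw [← omegaZero_add_two_sub hk₀]
    exact sub_nonneg.mpr (omegaZero_le_add_two hk₀)
  · exact (omegaZero_natCast_le hk).trans_lt (sub_neg.mpr eulerMascheroniConstant_lt_log_two)
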